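/- arXiv:1903.06721 — 9 statements merged into one kernel-verified Lean document; each statement's English description precedes it below -/
import Mathlib

section
/- Let d ≥ 1 and let ψ : Fin (d^2) → EuclideanSpace ℂ (Fin d) be a SIC, with Gram matrix G. Then the matrix Q = ((d+1)/(2d)) • (G ∘ G), where G ∘ G is the entrywise (Hadamard) product of G with itself, is Hermitian, satisfies Q * Q = Q, and has rank d(d+1)/2. -/
/-!
Let `T` be the matrix whose columns are the symmetric tensors `ψ j ⊗ ψ j`, so `Tᴴ T = G ∘ G`,
and let `W` swap the two tensor factors, so `W T = T`. For a SIC the frame potential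
`∑ j k, |⟪ψ j, ψ k⟫|⁴` equals `2 d³ / (d + 1)`, exactly the value for which the Frobenius norm of
`T Tᴴ - d / (d + 1) • (1 + W)` vanishes: the `ψ j ⊗ ψ j` form a tight frame for the symmetric
tensors. Hence `(G ∘ G)² = Tᴴ (T Tᴴ) T = 2 d / (d + 1) • G ∘ G`, so `Q` is an orthogonal
projection, and its rank is its trace `d² (d + 1) / (2 d)`.
-/

open Matrix Finset ComplexConjugate Fintype
open scoped InnerProductSpace ComplexOrder

namespace Matrix

theorem rank_eq_trace_of_isIdempotentElem {K n : Type*} [Field K] [Fintype n] [DecidableEq n]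
    {A : Matrix n n K} (hA : IsIdempotentElem A) : (A.rank : K) = A.trace := by
  have hlin : IsIdempotentElem (toLin' A) := hA.map (toLinAlgEquiv' (R := K) (n := n))
  rw [rank, ← toLin'_apply', ← (LinearMap.IsIdempotentElem.isProj_range _ hlin).trace,
    trace_toLin'_eq]

end Matrix

variable {ι m : Type*}

def tensorSquareMatrix (ψ : m → EuclideanSpace ℂ ι) : Matrix (ι × ι) m ℂ :=
  of fun x j => ψ j x.1 * ψ j x.2

variable (ι) in
def swapMatrix [DecidableEq ι] : Matrix (ι × ι) (ι × ι) ℂ :=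
  Equiv.Perm.permMatrix ℂ (Equiv.prodComm ι ι)

section Swap

variable [DecidableEq ι]

lemma conjTranspose_swapMatrix : (swapMatrix ι)ᴴ = swapMatrix ι := by
  rw [swapMatrix, conjTranspose_permMatrix]
  rfl

variable [Fintype ι]

lemma swapMatrix_mul_tensorSquareMatrix (ψ : m → EuclideanSpace ℂ ι) :
    swapMatrix ι * tensorSquareMatrix ψ = tensorSquareMatrix ψ := by
  rw [swapMatrix, PEquiv.toMatrix_toPEquiv_mul]
  ext x j
  exact mul_comm _ _

lemma conjTranspose_tensorSquareMatrix_mul_swapMatrix (ψ : m → EuclideanSpace ℂ ι) :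
    (tensorSquareMatrix ψ)ᴴ * swapMatrix ι = (tensorSquareMatrix ψ)ᴴ := by
  rw [← conjTranspose_swapMatrix, ← conjTranspose_mul, swapMatrix_mul_tensorSquareMatrix]

lemma swapMatrix_mul_self : swapMatrix ι * swapMatrix ι = 1 := by
  rw [swapMatrix, ← permMatrix_mul]
  convert permMatrix_one
  ext <;> rfl

lemma trace_swapMatrix : (swapMatrix ι).trace = card ι := by
  have hfix : Function.fixedPoints (Equiv.prodComm ι ι) = Set.range fun i : ι => (i, i) := by
    ext ⟨a, b⟩
    simp [Function.IsFixedPt, Prod.ext_iff, eq_comm]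
  rw [swapMatrix, trace_permutation, hfix,
    Set.ncard_range_of_injective fun a b h => congrArg Prod.fst h, Nat.card_eq_fintype_card]

end Swap

section GramSquare

variable [Fintype ι]

lemma conjTranspose_tensorSquareMatrix_mul_self (ψ : m → EuclideanSpace ℂ ι) :
    (tensorSquareMatrix ψ)ᴴ * tensorSquareMatrix ψ = gram ℂ ψ ⊙ gram ℂ ψ := by
  ext j k
  simp only [mul_apply, conjTranspose_apply, tensorSquareMatrix, of_apply, hadamard_apply,
    gram_apply, PiLp.inner_apply, RCLike.inner_apply, Fintype.sum_prod_type, Finset.sum_mul_sum,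
    star_mul', RCLike.star_def]
  refine sum_congr rfl fun a _ => sum_congr rfl fun b _ => ?_
  ring

variable [Fintype m]

lemma trace_hadamard_gram_self {ψ : m → EuclideanSpace ℂ ι} (hunit : ∀ j, ‖ψ j‖ = 1) :
    (gram ℂ ψ ⊙ gram ℂ ψ).trace = card m := by
  simp [trace, hunit]

lemma trace_hadamard_gram_self_mul_self (ψ : m → EuclideanSpace ℂ ι) :
    (gram ℂ ψ ⊙ gram ℂ ψ * (gram ℂ ψ ⊙ gram ℂ ψ)).trace
      = ((∑ j, ∑ k, ‖⟪ψ j, ψ k⟫_ℂ‖ ^ 4 : ℝ) : ℂ) := by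
  push_cast
  refine sum_congr rfl fun j _ => sum_congr rfl fun k _ => ?_
  have h := Complex.mul_conj' ⟪ψ j, ψ k⟫_ℂ
  simp only [hadamard_apply, gram_apply]
  rw [← inner_conj_symm (ψ k) (ψ j)]
  linear_combination (⟪ψ j, ψ k⟫_ℂ * conj ⟪ψ j, ψ k⟫_ℂ + (‖⟪ψ j, ψ k⟫_ℂ‖ : ℂ) ^ 2) * h

lemma trace_tensorSquareMatrix_mul_conjTranspose {ψ : m → EuclideanSpace ℂ ι}
    (hunit : ∀ j, ‖ψ j‖ = 1) :
    (tensorSquareMatrix ψ * (tensorSquareMatrix ψ)ᴴ).trace = card m := by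
  rw [trace_mul_comm, conjTranspose_tensorSquareMatrix_mul_self, trace_hadamard_gram_self hunit]

lemma trace_tensorSquareMatrix_mul_conjTranspose_sq (ψ : m → EuclideanSpace ℂ ι) :
    (tensorSquareMatrix ψ * (tensorSquareMatrix ψ)ᴴ *
        (tensorSquareMatrix ψ * (tensorSquareMatrix ψ)ᴴ)).trace
      = ((∑ j, ∑ k, ‖⟪ψ j, ψ k⟫_ℂ‖ ^ 4 : ℝ) : ℂ) := by
  simp only [Matrix.mul_assoc]
  rw [trace_mul_comm]
  simp only [Matrix.mul_assoc]
  rw [← Matrix.mul_assoc, conjTranspose_tensorSquareMatrix_mul_self,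
    trace_hadamard_gram_self_mul_self]

variable [DecidableEq ι]

theorem tensorSquareMatrix_mul_conjTranspose_eq_of_framePotential
    {ψ : m → EuclideanSpace ℂ ι} (hunit : ∀ j, ‖ψ j‖ = 1)
    (hpot : ∑ j, ∑ k, ‖⟪ψ j, ψ k⟫_ℂ‖ ^ 4 = 2 * (card m : ℝ) ^ 2 / (card ι * (card ι + 1))) :
    tensorSquareMatrix ψ * (tensorSquareMatrix ψ)ᴴ
      = ((card m : ℂ) / (card ι * (card ι + 1))) • (1 + swapMatrix ι) := by
  have hWT := swapMatrix_mul_tensorSquareMatrix ψ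
  have hTW := conjTranspose_tensorSquareMatrix_mul_swapMatrix ψ
  have htrS := trace_tensorSquareMatrix_mul_conjTranspose hunit
  have htrSS := trace_tensorSquareMatrix_mul_conjTranspose_sq ψ
  have hWW : swapMatrix ι * swapMatrix ι = 1 := swapMatrix_mul_self
  have htrW : (swapMatrix ι).trace = card ι := trace_swapMatrix
  set T := tensorSquareMatrix ψ
  set W := swapMatrix ι
  set μ : ℂ := card m / (card ι * (card ι + 1))
  have hSW : T * Tᴴ * W = T * Tᴴ := by rw [Matrix.mul_assoc, hTW]
  have hWS : W * (T * Tᴴ) = T * Tᴴ := by rw [← Matrix.mul_assoc, hWT]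
  set E := T * Tᴴ - μ • (1 + W)
  have hE : Eᴴ = E := by simp [E, μ, W, conjTranspose_swapMatrix]
  -- Since `W` fixes `T Tᴴ` on both sides and `W² = 1`,
  -- `trace (E * E) = (frame potential) - 4 μ n + 2 μ² d (d + 1)`.
  have hEE : (Eᴴ * E).trace = 0 := by
    rw [hE]
    simp only [E, sub_mul, mul_sub, Matrix.smul_mul, Matrix.mul_smul, add_mul, mul_add,
      Matrix.one_mul, Matrix.mul_one, hSW, hWS, hWW, trace_sub, trace_smul, trace_add, trace_one,
      htrW, htrSS, htrS, hpot, smul_eq_mul, Fintype.card_prod]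
    obtain hd | hd := eq_or_ne (card ι) 0
    · simp [μ, hd]
    · simp only [μ]
      push_cast
      field_simp
      ring
  exact sub_eq_zero.mp (trace_conjTranspose_mul_self_eq_zero_iff.mp hEE)

theorem hadamard_gram_mul_self_eq_smul {ψ : m → EuclideanSpace ℂ ι} {μ : ℂ}
    (h : tensorSquareMatrix ψ * (tensorSquareMatrix ψ)ᴴ = μ • (1 + swapMatrix ι)) :
    gram ℂ ψ ⊙ gram ℂ ψ * (gram ℂ ψ ⊙ gram ℂ ψ) = (2 * μ) • (gram ℂ ψ ⊙ gram ℂ ψ) := by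
  rw [← conjTranspose_tensorSquareMatrix_mul_self, Matrix.mul_assoc,
    ← Matrix.mul_assoc (tensorSquareMatrix ψ), h, Matrix.smul_mul, Matrix.add_mul, Matrix.one_mul,
    swapMatrix_mul_tensorSquareMatrix, Matrix.mul_smul, Matrix.mul_add]
  module

end GramSquare

structure IsSIC [Fintype ι] [Fintype m] (ψ : m → EuclideanSpace ℂ ι) : Prop where
  card_eq : card m = card ι ^ 2
  norm_eq_one : ∀ j, ‖ψ j‖ = 1
  norm_inner_sq_eq : ∀ j k, j ≠ k → ‖⟪ψ j, ψ k⟫_ℂ‖ ^ 2 = 1 / (card ι + 1)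

theorem IsSIC.sum_norm_inner_pow_four [Fintype ι] [Fintype m] {ψ : m → EuclideanSpace ℂ ι}
    (hψ : IsSIC ψ) :
    ∑ j, ∑ k, ‖⟪ψ j, ψ k⟫_ℂ‖ ^ 4 = 2 * (card m : ℝ) ^ 2 / (card ι * (card ι + 1)) := by
  classical
  have hterm : ∀ j k, ‖⟪ψ j, ψ k⟫_ℂ‖ ^ 4
      = 1 / ((card ι : ℝ) + 1) ^ 2 + if j = k then 1 - 1 / ((card ι : ℝ) + 1) ^ 2 else 0 := by
    intro j k
    split_ifs with hjk
    · rw [hjk, inner_self_eq_one_of_norm_eq_one (hψ.norm_eq_one k)]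
      simp
    · rw [show 4 = 2 * 2 from rfl, pow_mul, hψ.norm_inner_sq_eq j k hjk, div_pow, one_pow,
        add_zero]
  simp only [hterm, sum_add_distrib, sum_const, Fintype.sum_ite_eq, card_univ, hψ.card_eq,
    nsmul_eq_mul]
  obtain hd | hd := eq_or_ne (card ι) 0
  · simp [hd]
  · push_cast
    field_simp
    ring

/-- Let `d ≥ 1` and let `ψ : Fin (d^2) → EuclideanSpace ℂ (Fin d)` be a SIC
with Gram matrix `G`.  Then `Q = ((d+1)/(2d)) • (G ∘ G)` (Hadamard square) is Hermitian,
idempotent, and has rank `d(d+1)/2`. -/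
theorem stmt_0 (d : ℕ) (hd : 1 ≤ d)
    (ψ : Fin (d ^ 2) → EuclideanSpace ℂ (Fin d))
    (hunit : ∀ j, ‖ψ j‖ = 1)
    (hsic : ∀ j k, j ≠ k →
      ‖(inner ℂ (ψ j) (ψ k) : ℂ)‖ ^ 2 = 1 / (d + 1))
    (G : Matrix (Fin (d ^ 2)) (Fin (d ^ 2)) ℂ)
    (hG : ∀ j k, G j k = (inner ℂ (ψ j) (ψ k) : ℂ))
    (Q : Matrix (Fin (d ^ 2)) (Fin (d ^ 2)) ℂ)
    (hQ : Q = (((d : ℂ) + 1) / (2 * d)) • Matrix.hadamard G G) :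
    Q.IsHermitian ∧ Q * Q = Q ∧ Q.rank = d * (d + 1) / 2 := by
  have hd0 : (d : ℂ) ≠ 0 := Nat.cast_ne_zero.mpr (by omega)
  have hψ : IsSIC ψ := ⟨by simp, hunit, by simpa using hsic⟩
  obtain rfl : G = gram ℂ ψ := Matrix.ext hG
  have hsq := hadamard_gram_mul_self_eq_smul
    (tensorSquareMatrix_mul_conjTranspose_eq_of_framePotential hunit hψ.sum_norm_inner_pow_four)
  have htr := trace_hadamard_gram_self hunit
  simp only [Fintype.card_fin, Nat.cast_pow] at hsq htr
  have hidem : Q * Q = Q := by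
    rw [hQ, smul_mul_smul_comm, hsq, smul_smul]
    congr 1
    field_simp
  refine ⟨hQ ▸ ((isHermitian_gram ℂ ψ).hadamard (isHermitian_gram ℂ ψ)).smul ?_, hidem, ?_⟩
  · simp [IsSelfAdjoint]
  · apply Nat.cast_injective (R := ℂ)
    rw [rank_eq_trace_of_isIdempotentElem hidem, hQ, trace_smul, htr, smul_eq_mul,
      Nat.cast_div (Nat.even_mul_succ_self d).two_dvd two_ne_zero]
    push_cast
    field_simp
end

section
/- Let d ≥ 1, n ≥ 1, and let ψ : Fin n → EuclideanSpace ℂ (Fin d) be unit vectors such that there exists a real constant c with 0 ≤ c < 1 and |⟪ψ j, ψ k⟫| = c for all j ≠ k. Then the rank-one projectors P j (the d × d matrices with entries (P j) a b = (ψ j a) * conj (ψ j b)) are linearly independent over ℂ; in particular n ≤ d². -/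
/-!
Pairing matrices with `P k` through `M ↦ trace (P k * M)` gives
`trace (P k * P j) = |⟪ψ k, ψ j⟫|²`, so the matrix of pairings of the `P j` is
`(1 - c²) I + c² J` with `J` the all-ones matrix. Since `c < 1` this is positive definite, hence
invertible, and a family whose pairing matrix against some linear functionals is invertible is
linearly independent. The bound `n ≤ d²` is the dimension count in the space of `d × d` matrices.
-/

open Matrix

theorem LinearIndependent.of_isUnit_pairing {K M ι : Type*} [Field K] [AddCommGroup M]
    [Module K M] [Fintype ι] [DecidableEq ι] (v : ι → M) (φ : ι → Module.Dual K M)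
    (h : IsUnit (of fun k j => φ k (v j))) : LinearIndependent K v :=
  LinearIndependent.of_comp (LinearMap.pi φ) (linearIndependent_cols_of_isUnit h)

open scoped ComplexOrder in
theorem Matrix.posDef_of_diag_one_of_offDiag_const {𝕜 ι : Type*} [RCLike 𝕜] [Fintype ι]
    [DecidableEq ι] {t : ℝ} (ht0 : 0 ≤ t) (ht1 : t < 1) :
    (of fun i j : ι => if i = j then (1 : 𝕜) else t).PosDef := by
  have hsplit : of (fun i j : ι => if i = j then (1 : 𝕜) else t)
      = (1 - t) • (1 : Matrix ι ι 𝕜) + t • vecMulVec 1 (star 1) := by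
    ext i j
    by_cases h : i = j <;> simp [h, RCLike.real_smul_eq_coe_mul]
  rw [hsplit]
  exact (PosDef.one.smul (sub_pos.2 ht1)).add_posSemidef
    ((posSemidef_vecMulVec_self_star 1).smul ht0)

theorem Matrix.trace_vecMulVec_star_mul_vecMulVec_star {𝕜 ι : Type*} [RCLike 𝕜] [Fintype ι]
    (x y : EuclideanSpace 𝕜 ι) :
    trace (vecMulVec x.ofLp (star x.ofLp) * vecMulVec y.ofLp (star y.ofLp))
      = (‖inner 𝕜 x y‖ ^ 2 : 𝕜) := by
  rw [vecMulVec_mul_vecMulVec, trace_vecMulVec, dotProduct_smul, smul_eq_mul,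
    ← RCLike.mul_conj, inner_conj_symm, EuclideanSpace.inner_eq_star_dotProduct,
    EuclideanSpace.inner_eq_star_dotProduct, dotProduct_comm y.ofLp]

open scoped ComplexOrder in
theorem linearIndependent_vecMulVec_star_of_equiangular {𝕜 ι m : Type*} [RCLike 𝕜]
    [Fintype ι] [DecidableEq ι] [Fintype m] {ψ : ι → EuclideanSpace 𝕜 m}
    (hunit : ∀ j, ‖ψ j‖ = 1) {c : ℝ} (hc0 : 0 ≤ c) (hc1 : c < 1)
    (hang : ∀ j k, j ≠ k → ‖inner 𝕜 (ψ j) (ψ k)‖ = c) :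
    LinearIndependent 𝕜 fun j => vecMulVec (ψ j).ofLp (star (ψ j).ofLp) := by
  set P := fun j => vecMulVec (ψ j).ofLp (star (ψ j).ofLp)
  refine .of_isUnit_pairing P (fun k => traceLinearMap m 𝕜 𝕜 ∘ₗ LinearMap.mulLeft 𝕜 (P k)) ?_
  have hgram : of (fun k j => (traceLinearMap m 𝕜 𝕜 ∘ₗ LinearMap.mulLeft 𝕜 (P k)) (P j))
      = of fun k j => if k = j then 1 else ((c ^ 2 : ℝ) : 𝕜) := by
    ext k j
    simp only [P, of_apply, LinearMap.comp_apply, LinearMap.mulLeft_apply, traceLinearMap_apply,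
      trace_vecMulVec_star_mul_vecMulVec_star]
    split_ifs with h
    · simp [h, hunit]
    · simp [hang k j h]
  rw [hgram]
  exact (posDef_of_diag_one_of_offDiag_const (sq_nonneg c) (by nlinarith)).isUnit

theorem stmt_4_general (d n : ℕ)
    (ψ : Fin n → EuclideanSpace ℂ (Fin d))
    (hunit : ∀ j, ‖ψ j‖ = 1)
    (c : ℝ) (hc0 : 0 ≤ c) (hc1 : c < 1)
    (hang : ∀ j k, j ≠ k → ‖(inner ℂ (ψ j) (ψ k) : ℂ)‖ = c)
    (P : Fin n → Matrix (Fin d) (Fin d) ℂ)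
    (hP : ∀ j a b, P j a b = ψ j a * starRingEnd ℂ (ψ j b)) :
    LinearIndependent ℂ P ∧ n ≤ d ^ 2 := by
  obtain rfl : P = fun j => vecMulVec (ψ j).ofLp (star (ψ j).ofLp) := by
    ext j a b
    simp [hP, vecMulVec_apply]
  have hli := linearIndependent_vecMulVec_star_of_equiangular hunit hc0 hc1 hang
  exact ⟨hli, by simpa [Module.finrank_matrix, sq] using hli.fintype_card_le_finrank⟩

/-- The rank-one projectors associated to an equiangular family of unit
vectors (with common angle `c`, `0 ≤ c < 1`) are linearly independent; in particular
`n ≤ d²`. -/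
theorem stmt_4 (d n : ℕ) (hd : 1 ≤ d) (hn : 1 ≤ n)
    (ψ : Fin n → EuclideanSpace ℂ (Fin d))
    (hunit : ∀ j, ‖ψ j‖ = 1)
    (c : ℝ) (hc0 : 0 ≤ c) (hc1 : c < 1)
    (hang : ∀ j k, j ≠ k → ‖(inner ℂ (ψ j) (ψ k) : ℂ)‖ = c)
    (P : Fin n → Matrix (Fin d) (Fin d) ℂ)
    (hP : ∀ j a b, P j a b = ψ j a * starRingEnd ℂ (ψ j b)) :
    LinearIndependent ℂ P ∧ n ≤ d ^ 2 :=
  stmt_4_general d n ψ hunit c hc0 hc1 hang P hP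
end

section
/- Let d ≥ 1, n ≥ 1, r ≥ 1, and let Π : Fin n → Matrix (Fin d) (Fin d) ℂ be a family of orthogonal projections (i.e., each Π j is Hermitian and satisfies Π j * Π j = Π j) each of rank r, such that there is a real constant c with c ≠ r and Tr(Π j * Π k) = c for all j ≠ k. Then the matrices Π j are linearly independent over ℂ; in particular n ≤ d². -/
/-!
For the bilinear form `⟨A, B⟩ = Tr (A B)` the Gram matrix of the family is `(r - c) I + c J`,
with eigenvalues `r - c` and `r - c + n c`. Both are nonzero: `Tr (Π_j Π_k)` is the squared
Hilbert–Schmidt norm of `Π_k Π_j`, so `c ≥ 0` once there are two distinct projections. A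
nonsingular Gram matrix forces linear independence, and `n ≤ d²` is the dimension count.
-/

open Matrix ComplexOrder

namespace Matrix

variable {m : Type*} [Fintype m]

theorem trace_eq_rank_of_isIdempotentElem {K : Type*} [Field K] [DecidableEq m]
    {A : Matrix m m K} (hA : IsIdempotentElem A) : A.trace = A.rank := by
  have hlin : IsIdempotentElem A.mulVecLin := hA.map Matrix.toLinAlgEquiv'
  rw [rank, ← (LinearMap.IsIdempotentElem.isProj_range _ hlin).trace,
    LinearMap.trace_eq_matrix_trace K (Pi.basisFun K m), LinearMap.toMatrix_eq_toMatrix',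
    ← toLin'_apply', LinearMap.toMatrix'_toLin']

theorem trace_mul_nonneg_of_isHermitian_of_isIdempotentElem {R : Type*} [CommRing R]
    [PartialOrder R] [StarRing R] [StarOrderedRing R] {A B : Matrix m m R}
    (hA : A.IsHermitian) (hB : B.IsHermitian) (hA2 : IsIdempotentElem A)
    (hB2 : IsIdempotentElem B) : 0 ≤ (A * B).trace := by
  have hgram : (B * A)ᴴ * (B * A) = A * B * A := by
    rw [conjTranspose_mul, hA.eq, hB.eq, Matrix.mul_assoc, ← Matrix.mul_assoc B, hB2.eq,
      Matrix.mul_assoc]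
  have htrace : (A * B * A).trace = (A * B).trace := by
    rw [trace_mul_cycle, hA2.eq]
  rw [← htrace, ← hgram]
  exact (posSemidef_conjTranspose_mul_self _).trace_nonneg

end Matrix

theorem LinearMap.BilinForm.linearIndependent_of_apply_eq_ite {K M ι : Type*} [Field K]
    [AddCommGroup M] [Module K M] [Fintype ι] [DecidableEq ι]
    (B : LinearMap.BilinForm K M) {v : ι → M} {a b : K}
    (hv : ∀ j k, B (v j) (v k) = if j = k then a else b)
    (hab : a ≠ b) (hsum : a - b + Fintype.card ι * b ≠ 0) : LinearIndependent K v := by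
  rw [Fintype.linearIndependent_iff]
  intro g hg
  set S := ∑ j, g j
  have hrow : ∀ k, (a - b) * g k + b * S = 0 := by
    intro k
    have hk := congrArg (B (v k)) hg
    simp only [map_sum, map_smul, smul_eq_mul, map_zero, hv] at hk
    calc (a - b) * g k + b * S
        = ∑ j, ((a - b) * (if k = j then g j else 0) + b * g j) := by
          rw [Finset.sum_add_distrib, ← Finset.mul_sum, ← Finset.mul_sum,
            Finset.sum_ite_eq Finset.univ k, if_pos (Finset.mem_univ k)]
      _ = ∑ j, g j * (if k = j then a else b) := by
          refine Finset.sum_congr rfl fun j _ => ?_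
          split_ifs <;> ring
      _ = 0 := hk
  have hS : S = 0 := by
    have htotal := Finset.sum_eq_zero (s := Finset.univ) fun k _ => hrow k
    rw [Finset.sum_add_distrib, ← Finset.mul_sum, Finset.sum_const, Finset.card_univ,
      nsmul_eq_mul] at htotal
    refine (mul_eq_zero.mp (?_ : (a - b + Fintype.card ι * b) * S = 0)).resolve_left hsum
    linear_combination htotal
  intro k
  simpa [hS, sub_ne_zero.mpr hab] using hrow k

theorem stmt_5_general (d n r : ℕ) (hr : 1 ≤ r)
    (Pi : Fin n → Matrix (Fin d) (Fin d) ℂ)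
    (hherm : ∀ j, (Pi j).IsHermitian)
    (hproj : ∀ j, Pi j * Pi j = Pi j)
    (hrank : ∀ j, (Pi j).rank = r)
    (c : ℝ) (hc : c ≠ (r : ℝ))
    (htr : ∀ j k, j ≠ k → (Pi j * Pi k).trace = (c : ℂ)) :
    LinearIndependent ℂ Pi ∧ n ≤ d ^ 2 := by
  have hgram : ∀ j k, (Pi j * Pi k).trace = if j = k then (r : ℂ) else c := by
    intro j k
    split_ifs with hjk
    · rw [hjk, hproj, trace_eq_rank_of_isIdempotentElem (hproj k), hrank]
    · exact htr j k hjk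
  have hc0 : 2 ≤ n → 0 ≤ c := fun hn => by
    have h01 : (⟨0, by omega⟩ : Fin n) ≠ ⟨1, hn⟩ := by simp
    have h01nonneg := trace_mul_nonneg_of_isHermitian_of_isIdempotentElem (hherm ⟨0, by omega⟩)
      (hherm ⟨1, hn⟩) (hproj _) (hproj _)
    rwa [htr _ _ h01, Complex.zero_le_real] at h01nonneg
  have hsum : (r : ℝ) - c + n * c ≠ 0 := by
    rcases Nat.lt_or_ge n 2 with hn | hn
    · interval_cases n
      · simpa [sub_eq_zero] using hc.symm
      · simpa using (by omega : r ≠ 0)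
    · have hc0 := hc0 hn
      have hr1 : (1 : ℝ) ≤ r := by exact_mod_cast hr
      have hn2 : (2 : ℝ) ≤ n := by exact_mod_cast hn
      nlinarith
  have hLI : LinearIndependent ℂ Pi :=
    LinearMap.BilinForm.linearIndependent_of_apply_eq_ite
      ((LinearMap.mul ℂ (Matrix (Fin d) (Fin d) ℂ)).compr₂ (traceLinearMap (Fin d) ℂ ℂ))
      (by simpa using hgram) (by exact_mod_cast hc.symm) (by simpa using (by exact_mod_cast hsum))
  refine ⟨hLI, ?_⟩
  simpa [Module.finrank_matrix, sq] using hLI.fintype_card_le_finrank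

/-- A family of rank-`r` orthogonal projections whose pairwise
Hilbert–Schmidt inner products all equal a constant `c ≠ r` is linearly independent;
in particular `n ≤ d²`. -/
theorem stmt_5 (d n r : ℕ) (hd : 1 ≤ d) (hn : 1 ≤ n) (hr : 1 ≤ r)
    (Pi : Fin n → Matrix (Fin d) (Fin d) ℂ)
    (hherm : ∀ j, (Pi j).IsHermitian)
    (hproj : ∀ j, Pi j * Pi j = Pi j)
    (hrank : ∀ j, (Pi j).rank = r)
    (c : ℝ) (hc : c ≠ (r : ℝ))
    (htr : ∀ j k, j ≠ k → (Pi j * Pi k).trace = (c : ℂ)) :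
    LinearIndependent ℂ Pi ∧ n ≤ d ^ 2 :=
  stmt_5_general d n r hr Pi hherm hproj hrank c hc htr
end

section
/- Let d ≥ 1, n ≥ 1, and let ψ : Fin n → EuclideanSpace ℂ (Fin d) be unit vectors. Then (d(d+1)/2) · ∑_{j,k ∈ Fin n} |⟪ψ j, ψ k⟫|^4 ≥ n². (This is the Welch bound for t = 2.) -/
/-!
The vectors `ψ j ⊗ ψ j` lie in the symmetric square of `ℂ^d`, which has dimension `d(d+1)/2` and
is realised isometrically in `ℂ^(Sym2 (Fin d))`; there `⟪ψ j ⊗ ψ j, ψ k ⊗ ψ k⟫ = ⟪ψ j, ψ k⟫²`.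
So it suffices to prove the `t = 1` bound `(∑ ‖w j‖²)² ≤ D ∑ |⟪w j, w k⟫|²` for vectors in `ℂ^D`.
That is Cauchy–Schwarz between the identity matrix and the frame operator `∑ w j (w j)^*`, whose
squared Hilbert–Schmidt norm is `∑ |⟪w j, w k⟫|²` and whose trace is `∑ ‖w j‖²`.
-/

open Finset ComplexConjugate
open scoped InnerProductSpace

lemma Sym2.sum_mk_eq_sum_smul {α M : Type*} [Fintype α] [DecidableEq α] [AddCommMonoid M]
    (f : Sym2 α → M) :
    ∑ p : α × α, f s(p.1, p.2) = ∑ z, #{p : α × α | s(p.1, p.2) = z} • f z := by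
  rw [sum_comp f (fun p : α × α => s(p.1, p.2)),
    image_univ_of_surjective (f := fun p : α × α => s(p.1, p.2)) Sym2.mk_surjective]

namespace EuclideanSpace

section WelchBoundOne

variable {κ : Type*} [Fintype κ]

/-- The rank-one matrix `v v^*`, as a vector for the Hilbert–Schmidt inner product. -/
def outerSelf (v : EuclideanSpace ℂ κ) : EuclideanSpace ℂ (κ × κ) :=
  WithLp.toLp 2 fun p => v p.1 * conj (v p.2)

lemma inner_outerSelf (v w : EuclideanSpace ℂ κ) :
    ⟪outerSelf v, outerSelf w⟫_ℂ = (‖⟪v, w⟫_ℂ‖ ^ 2 : ℝ) := by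
  rw [Complex.ofReal_pow, ← Complex.mul_conj', inner_conj_symm]
  simp only [outerSelf, PiLp.inner_apply, RCLike.inner_apply, Fintype.sum_prod_type, sum_mul_sum,
    map_mul, Complex.conj_conj]
  exact sum_congr rfl fun a _ => sum_congr rfl fun b _ => by ring

variable [DecidableEq κ]

def diagOne : EuclideanSpace ℂ (κ × κ) :=
  WithLp.toLp 2 fun p => if p.1 = p.2 then 1 else 0

lemma inner_diagOne_outerSelf (v : EuclideanSpace ℂ κ) :
    ⟪diagOne, outerSelf v⟫_ℂ = (‖v‖ ^ 2 : ℝ) := by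
  simp [diagOne, outerSelf, PiLp.inner_apply, Fintype.sum_prod_type, EuclideanSpace.norm_sq_eq,
    Complex.mul_conj']

lemma norm_diagOne_sq : ‖(diagOne : EuclideanSpace ℂ (κ × κ))‖ ^ 2 = Fintype.card κ := by
  rw [EuclideanSpace.norm_sq_eq, Fintype.sum_prod_type]
  simp [diagOne, apply_ite]

theorem welch_bound_one {ι : Type*} [Fintype ι] (w : ι → EuclideanSpace ℂ κ) :
    (∑ j, ‖w j‖ ^ 2) ^ 2 ≤ Fintype.card κ * ∑ j, ∑ k, ‖⟪w j, w k⟫_ℂ‖ ^ 2 := by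
  set F := ∑ j, outerSelf (w j)
  have hF : ‖F‖ ^ 2 = ∑ j, ∑ k, ‖⟪w j, w k⟫_ℂ‖ ^ 2 := by
    have : ⟪F, F⟫_ℂ = ((∑ j, ∑ k, ‖⟪w j, w k⟫_ℂ‖ ^ 2 : ℝ) : ℂ) := by
      simp only [F, sum_inner, inner_sum, inner_outerSelf]
      push_cast
      exact sum_comm
    rw [norm_sq_eq_re_inner (𝕜 := ℂ), this, RCLike.re_to_complex, Complex.ofReal_re]
  have htrace : ⟪diagOne, F⟫_ℂ = (∑ j, ‖w j‖ ^ 2 : ℝ) := by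
    simp only [F, inner_sum, inner_diagOne_outerSelf]
    push_cast
    rfl
  have hsum_nonneg : 0 ≤ ∑ j, ‖w j‖ ^ 2 := sum_nonneg fun j _ => sq_nonneg _
  have cs := norm_inner_le_norm (𝕜 := ℂ) diagOne F
  rw [htrace, Complex.norm_real, Real.norm_of_nonneg hsum_nonneg] at cs
  have := pow_le_pow_left₀ hsum_nonneg cs 2
  rwa [mul_pow, norm_diagOne_sq, hF] at this

end WelchBoundOne

section SymmetricSquare

variable {α : Type*} [Fintype α] [DecidableEq α]

/-- The weight `√(number of ordered pairs representing z)`, i.e. `√2` off the diagonal, makes this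
an isometric copy of `v ⊗ v` inside the symmetric square. -/
noncomputable def symSq (v : EuclideanSpace ℂ α) : EuclideanSpace ℂ (Sym2 α) :=
  WithLp.toLp 2 fun z => √(#{p : α × α | s(p.1, p.2) = z} : ℝ) * (z.map v).mul

lemma inner_symSq (v w : EuclideanSpace ℂ α) : ⟪symSq v, symSq w⟫_ℂ = ⟪v, w⟫_ℂ ^ 2 := by
  have hz : ∀ z : Sym2 α, conj (symSq v z) * symSq w z =
      #{p : α × α | s(p.1, p.2) = z} • (z.map fun a => conj (v a) * w a).mul := by
    intro z
    induction z using Sym2.ind with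
    | h a b =>
      simp only [symSq, map_mul, Complex.conj_ofReal, nsmul_eq_mul, Sym2.map_mk, Sym2.mul_mk]
      generalize #{p : α × α | s(p.1, p.2) = s(a, b)} = m
      have hm : (√(m : ℝ) : ℂ) * √(m : ℝ) = m := by
        rw [← Complex.ofReal_mul, Real.mul_self_sqrt m.cast_nonneg, Complex.ofReal_natCast]
      linear_combination (conj (v a) * conj (v b) * (w a * w b)) * hm
  calc ⟪symSq v, symSq w⟫_ℂ = ∑ z, conj (symSq v z) * symSq w z := by
        simp [PiLp.inner_apply, mul_comm]
    _ = ∑ z, #{p : α × α | s(p.1, p.2) = z} • (z.map fun a => conj (v a) * w a).mul :=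
        sum_congr rfl fun z _ => hz z
    _ = ∑ p : α × α, (s(p.1, p.2).map fun a => conj (v a) * w a).mul :=
        (Sym2.sum_mk_eq_sum_smul _).symm
    _ = ⟪v, w⟫_ℂ ^ 2 := by
        simp [Fintype.sum_prod_type, sq, sum_mul_sum, PiLp.inner_apply, mul_comm]

lemma norm_symSq (v : EuclideanSpace ℂ α) : ‖symSq v‖ = ‖v‖ ^ 2 := by
  have h : ⟪symSq v, symSq v⟫_ℂ = ⟪v, v⟫_ℂ ^ 2 := inner_symSq v v
  rw [inner_self_eq_norm_sq_to_K, inner_self_eq_norm_sq_to_K] at h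
  have h' : ‖symSq v‖ ^ 2 = (‖v‖ ^ 2) ^ 2 := by exact_mod_cast h
  exact (sq_eq_sq₀ (norm_nonneg _) (by positivity)).mp h'

end SymmetricSquare

end EuclideanSpace

theorem stmt_6_general (d n : ℕ)
    (ψ : Fin n → EuclideanSpace ℂ (Fin d))
    (hunit : ∀ j, ‖ψ j‖ = 1) :
    ((d * (d + 1) / 2 : ℕ) : ℝ) *
      ∑ j : Fin n, ∑ k : Fin n, ‖(inner ℂ (ψ j) (ψ k) : ℂ)‖ ^ 4
    ≥ (n : ℝ) ^ 2 := by
  have hdim : d * (d + 1) / 2 = Fintype.card (Sym2 (Fin d)) := by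
    rw [Sym2.card, Fintype.card_fin, Nat.choose_two_right, Nat.add_sub_cancel, mul_comm]
  have h := EuclideanSpace.welch_bound_one fun j => EuclideanSpace.symSq (ψ j)
  simp only [EuclideanSpace.norm_symSq, hunit, EuclideanSpace.inner_symSq, norm_pow, one_pow,
    sum_const, card_univ, Fintype.card_fin, nsmul_eq_mul, mul_one, ← pow_mul] at h
  rwa [hdim, ge_iff_le]

/-- The Welch bound for `t = 2`: for any family of `n` unit vectors in
`ℂ^d`, `(d(d+1)/2) · ∑_{j,k} |⟪ψ j, ψ k⟫|⁴ ≥ n²`. -/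
theorem stmt_6 (d n : ℕ) (hd : 1 ≤ d) (hn : 1 ≤ n)
    (ψ : Fin n → EuclideanSpace ℂ (Fin d))
    (hunit : ∀ j, ‖ψ j‖ = 1) :
    ((d * (d + 1) / 2 : ℕ) : ℝ) *
      ∑ j : Fin n, ∑ k : Fin n, ‖(inner ℂ (ψ j) (ψ k) : ℂ)‖ ^ 4
    ≥ (n : ℝ) ^ 2 :=
  stmt_6_general d n ψ hunit
end

section
/- Let d ≥ 1, n ≥ 1, and let ψ : Fin n → EuclideanSpace ℂ (Fin d) be any family of vectors with Gram matrix G (G j k = ⟪ψ j, ψ k⟫). Then the Hadamard square G ∘ G, with entries (G ∘ G) j k = (G j k)^2, has rank at most d(d+1)/2. -/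
/-!
Writing `G = Mᴴ M` with `M` the coordinate matrix of the vectors, the Hadamard square
factors as `(G ⊙ G) j k = ∑_{a,b} conj (M a j M b j) · M a k M b k`, i.e. `G ⊙ G = Kᴴ K` where
the column `k` of `K` is `ψ k ⊗ ψ k`. The rows `(a, b)` and `(b, a)` of `K` coincide, so `K`
has at most as many distinct rows as there are unordered pairs `{a, b}`, namely `d(d+1)/2`.
-/

open Matrix
open scoped Kronecker

namespace Matrix

variable {R : Type*}

theorem hadamard_mul_eq_submatrix_kronecker_mul [CommSemiring R] {l m m' p : Type*}
    [Fintype m] [Fintype m'] (A : Matrix l m R) (B : Matrix m p R) (C : Matrix l m' R)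
    (D : Matrix m' p R) :
    (A * B) ⊙ (C * D) =
      (A ⊗ₖ C).submatrix (fun i ↦ (i, i)) id * (B ⊗ₖ D).submatrix id (fun j ↦ (j, j)) := by
  rw [← submatrix_mul _ _ _ _ _ Function.bijective_id, ← mul_kronecker_mul]
  rfl

theorem rank_le_card_sym2_of_apply_swap [CommSemiring R] [StrongRankCondition R]
    {ι n : Type*} [Fintype ι] [Fintype n] [DecidableEq ι] (K : Matrix (ι × ι) n R)
    (hK : ∀ a b, K (a, b) = K (b, a)) : K.rank ≤ Fintype.card (Sym2 ι) := by
  let K' : Matrix (Sym2 ι) n R := Sym2.lift ⟨fun a b ↦ K (a, b), hK⟩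
  calc K.rank = (K'.submatrix (Function.uncurry Sym2.mk) id).rank := rfl
    _ ≤ K'.rank := rank_submatrix_le _ _ _
    _ ≤ Fintype.card (Sym2 ι) := rank_le_card_height _

end Matrix

open Module in
theorem rank_gram_hadamard_gram_le (𝕜 : Type*) {E n : Type*} [RCLike 𝕜] [NormedAddCommGroup E]
    [InnerProductSpace 𝕜 E] [FiniteDimensional 𝕜 E] [Fintype n] (v : n → E) :
    (gram 𝕜 v ⊙ gram 𝕜 v).rank ≤ finrank 𝕜 E * (finrank 𝕜 E + 1) / 2 := by
  classical
  let M : Matrix (Fin (finrank 𝕜 E)) n 𝕜 := of fun i j ↦ stdOrthonormalBasis 𝕜 E |>.repr (v j) i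
  rw [gram_eq_conjTranspose_mul (stdOrthonormalBasis 𝕜 E), hadamard_mul_eq_submatrix_kronecker_mul]
  calc _ ≤ ((M ⊗ₖ M).submatrix id fun j ↦ (j, j)).rank := rank_mul_le_right _ _
    _ ≤ Fintype.card (Sym2 (Fin (finrank 𝕜 E))) :=
      rank_le_card_sym2_of_apply_swap _ fun a b ↦ funext fun _ ↦ mul_comm _ _
    _ = finrank 𝕜 E * (finrank 𝕜 E + 1) / 2 := by
      rw [Sym2.card, Fintype.card_fin, Nat.choose_two_right, Nat.add_sub_cancel, mul_comm]

theorem stmt_7_general (d n : ℕ)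
    (ψ : Fin n → EuclideanSpace ℂ (Fin d))
    (G : Matrix (Fin n) (Fin n) ℂ)
    (hG : ∀ j k, G j k = (inner ℂ (ψ j) (ψ k) : ℂ)) :
    (Matrix.hadamard G G).rank ≤ d * (d + 1) / 2 := by
  have hGram : G = gram ℂ ψ := Matrix.ext hG
  simpa only [hGram, finrank_euclideanSpace_fin] using rank_gram_hadamard_gram_le ℂ ψ

/-- For any family of vectors `ψ : Fin n → ℂ^d` with Gram matrix `G`,
the Hadamard square `G ∘ G` has rank at most `d(d+1)/2`. -/
theorem stmt_7 (d n : ℕ) (hd : 1 ≤ d) (hn : 1 ≤ n)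
    (ψ : Fin n → EuclideanSpace ℂ (Fin d))
    (G : Matrix (Fin n) (Fin n) ℂ)
    (hG : ∀ j k, G j k = (inner ℂ (ψ j) (ψ k) : ℂ)) :
    (Matrix.hadamard G G).rank ≤ d * (d + 1) / 2 :=
  stmt_7_general d n ψ G hG
end

section
/- Let H be a 9 × 9 complex matrix that is Hermitian, satisfies H * H = 1 (so H is unitary), has all entries of absolute value 1/3, and has positive real diagonal entries. Then G = (3/2) • (1 − H) is Hermitian positive semidefinite of rank 3, satisfies G * G = 3 • G, has all diagonal entries equal to 1, and all its off-diagonal entries have absolute value 1/2. Consequently G is the Gram matrix of a SIC in dimension 3. -/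
/-!
Since `H` is a Hermitian involution whose diagonal entries are forced to be `1/3`, the matrix
`P = (1 - H) / 2` is an orthogonal projection of trace `(9 - 3) / 2 = 3`; hence `G = 3 P` is
positive semidefinite of rank `3` with `G² = 3 G`, and the moduli of its entries are read off
from those of `H`. A positive semidefinite matrix of rank `r` is `Bᴴ B` for some `B`, i.e. the
Gram matrix of the columns of `B`; these span an `r`-dimensional space, and an orthonormal basis
of that span carries them isometrically into `ℂ^r`, giving the SIC vectors.
-/

open scoped ComplexOrder MatrixOrder InnerProductSpace
open Matrix Module Submodule

namespace Matrix

section Gram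

variable {𝕜 : Type*} [RCLike 𝕜]

theorem conjTranspose_mul_self_eq_gram {m n : Type*} [Fintype m] (B : Matrix m n 𝕜) :
    Bᴴ * B = gram 𝕜 (fun j ↦ WithLp.toLp 2 (B.col j)) := by
  ext i j
  simp [mul_apply, PiLp.inner_apply, mul_comm]

theorem finrank_span_toLp_col {m n : Type*} [Fintype n] (B : Matrix m n 𝕜) :
    finrank 𝕜 (span 𝕜 (Set.range fun j ↦ WithLp.toLp 2 (B.col j))) = B.rank := by
  rw [rank_eq_finrank_span_cols, ← (WithLp.linearEquiv 2 𝕜 (m → 𝕜)).symm.finrank_map_eq,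
    LinearMap.map_span, ← Set.range_comp]
  rfl

theorem exists_gram_eq_of_finrank_span {n E : Type*} [Finite n] [NormedAddCommGroup E]
    [InnerProductSpace 𝕜 E] (v : n → E) {r : ℕ} (hr : finrank 𝕜 (span 𝕜 (Set.range v)) = r) :
    ∃ w : n → EuclideanSpace 𝕜 (Fin r), gram 𝕜 w = gram 𝕜 v := by
  have := FiniteDimensional.span_of_finite 𝕜 (Set.finite_range v)
  let e := ((stdOrthonormalBasis 𝕜 (span 𝕜 (Set.range v))).reindex (finCongr hr)).repr
  refine ⟨fun i ↦ e ⟨v i, subset_span ⟨i, rfl⟩⟩, ?_⟩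
  ext i j
  simp [e.inner_map_map]

theorem PosSemidef.exists_eq_gram_of_rank_eq {n : Type*} [Fintype n] {A : Matrix n n 𝕜}
    (hA : A.PosSemidef) {r : ℕ} (hr : A.rank = r) :
    ∃ v : n → EuclideanSpace 𝕜 (Fin r), A = gram 𝕜 v := by
  classical
  obtain ⟨B, rfl⟩ := CStarAlgebra.nonneg_iff_eq_star_mul_self.mp hA.nonneg
  rw [star_eq_conjTranspose, rank_conjTranspose_mul_self, ← finrank_span_toLp_col] at hr
  obtain ⟨w, hw⟩ := exists_gram_eq_of_finrank_span _ hr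
  exact ⟨w, by rw [star_eq_conjTranspose, conjTranspose_mul_self_eq_gram, hw]⟩

end Gram

section Projection

variable {K n : Type*} [Field K] [Fintype n] [DecidableEq n]

theorem rank_eq_trace_of_isIdempotentElem_s8 {P : Matrix n n K} (hP : IsIdempotentElem P) :
    (P.rank : K) = P.trace := by
  have hP' : IsIdempotentElem P.mulVecLin := hP.map toLinAlgEquiv'
  rw [← trace_toLin'_eq, toLin'_apply',
    ((LinearMap.isProj_range_iff_isIdempotentElem _).mpr hP').trace, rank]

theorem rank_mul_eq_trace_of_mul_self_eq_smul {A : Matrix n n K} {c : K} (hc : c ≠ 0)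
    (h : A * A = c • A) : (A.rank : K) * c = A.trace := by
  have hP : IsIdempotentElem (c⁻¹ • A) := by
    rw [IsIdempotentElem, smul_mul_smul_comm, h, smul_smul, inv_mul_cancel_right₀ hc]
  have hrank := rank_eq_trace_of_isIdempotentElem_s8 hP
  rw [rank_smul_of_mem_nonZeroDivisors _ (mem_nonZeroDivisors_of_ne_zero (inv_ne_zero hc)),
    trace_smul, smul_eq_mul] at hrank
  rw [hrank, mul_right_comm, inv_mul_cancel₀ hc, one_mul]

end Projection

theorem IsHermitian.posSemidef_of_mul_self_eq_smul {𝕜 n : Type*} [RCLike 𝕜] [Fintype n]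
    {A : Matrix n n 𝕜} (hA : A.IsHermitian) {c : 𝕜} (hc : 0 < c) (h : A * A = c • A) :
    A.PosSemidef := by
  have hA' : A = c⁻¹ • (Aᴴ * A) := by
    rw [hA.eq, h, smul_smul, inv_mul_cancel₀ hc.ne', one_smul]
  rw [hA']
  exact (posSemidef_conjTranspose_mul_self A).smul (inv_nonneg.mpr hc.le)

end Matrix

/-- If `H` is a `9 × 9` complex Hermitian Hadamard matrix (Hermitian,
`H * H = 1`, all entries of absolute value `1/3`) with positive real diagonal entries, then
`G = (3/2) • (1 - H)` is Hermitian positive semidefinite of rank `3`, satisfies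
`G * G = 3 • G`, has unit diagonal and all off-diagonal entries of absolute value `1/2`;
consequently `G` is the Gram matrix of a SIC in dimension `3`. -/
theorem stmt_8 (H : Matrix (Fin 9) (Fin 9) ℂ)
    (hherm : H.IsHermitian)
    (hunitary : H * H = 1)
    (habs : ∀ j k, ‖H j k‖ = 1 / 3)
    (hdiag : ∀ j, (H j j).im = 0 ∧ 0 < (H j j).re)
    (G : Matrix (Fin 9) (Fin 9) ℂ)
    (hG : G = ((3 : ℂ) / 2) • ((1 : Matrix (Fin 9) (Fin 9) ℂ) - H)) :
    G.IsHermitian ∧ G.PosSemidef ∧ G.rank = 3 ∧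
    G * G = (3 : ℂ) • G ∧
    (∀ j, G j j = 1) ∧
    (∀ j k, j ≠ k → ‖G j k‖ = 1 / 2) ∧
    -- consequently, `G` is the Gram matrix of a SIC in dimension `3`:
    ∃ ψ : Fin 9 → EuclideanSpace ℂ (Fin 3),
      (∀ j, ‖ψ j‖ = 1) ∧
      (∀ j k, j ≠ k → ‖(inner ℂ (ψ j) (ψ k) : ℂ)‖ ^ 2 = 1 / 4) ∧
      (∀ j k, G j k = (inner ℂ (ψ j) (ψ k) : ℂ)) := by
  have hHdiag (j : Fin 9) : H j j = 1 / 3 := by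
    have hpos : 0 < H j j := Complex.lt_def.mpr ⟨(hdiag j).2, (hdiag j).1.symm⟩
    rw [Complex.eq_coe_norm_of_nonneg hpos.le, habs]
    norm_num
  have hGherm : G.IsHermitian := by
    rw [hG, IsHermitian, conjTranspose_smul, conjTranspose_sub, conjTranspose_one, hherm.eq]
    norm_num
  have hGG : G * G = (3 : ℂ) • G := by
    have hproj : (1 - H) * (1 - H) = (2 : ℂ) • (1 - H) := by
      rw [sub_mul, one_mul, mul_sub, mul_one, hunitary, two_smul]
      abel
    rw [hG, smul_mul_smul_comm, hproj, smul_smul, smul_smul]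
    norm_num
  have hGdiag (j : Fin 9) : G j j = 1 := by
    simp [hG, hHdiag]
    norm_num
  have hGoff (j k : Fin 9) (hjk : j ≠ k) : ‖G j k‖ = 1 / 2 := by
    simp [hG, one_apply_ne hjk, habs]
    norm_num
  have hpsd := hGherm.posSemidef_of_mul_self_eq_smul (by norm_num) hGG
  have hrank : G.rank = 3 := by
    have htrace := rank_mul_eq_trace_of_mul_self_eq_smul three_ne_zero hGG
    simp only [trace, diag, hGdiag, Finset.sum_const, Finset.card_univ, Fintype.card_fin] at htrace
    exact_mod_cast (by linear_combination htrace / 3 : (G.rank : ℂ) = 3)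
  obtain ⟨ψ, hψ⟩ := hpsd.exists_eq_gram_of_rank_eq hrank
  have hinner (j k : Fin 9) : G j k = ⟪ψ j, ψ k⟫_ℂ := by rw [hψ, gram_apply]
  refine ⟨hGherm, hpsd, hrank, hGG, hGdiag, hGoff, ψ, fun j ↦ ?_, fun j k hjk ↦ ?_, hinner⟩
  · rw [norm_eq_sqrt_re_inner (𝕜 := ℂ), ← hinner, hGdiag]
    simp
  · rw [← hinner, hGoff j k hjk]
    norm_num
end

section
/- Let H be a 9 × 9 complex matrix that is Hermitian, satisfies H * H = 1 (so H is unitary), has all entries of absolute value 1/3, and has positive real diagonal entries. Then the matrix 3 • (H ∘ H), where H ∘ H is the entrywise (Hadamard) product of H with itself, is also Hermitian, satisfies (3 • (H ∘ H)) * (3 • (H ∘ H)) = 1, has all entries of absolute value 1/3, and has positive real diagonal entries. -/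
/-!
Put `Q = (1 - H) / 2`, the orthogonal projection onto the `-1`-eigenspace of `H`. Its diagonal
entries are `1/3`, so it has rank `3`, its off-diagonal entries have modulus `1/6`, and
`3 • H ⊙ H = 12 • Q ⊙ Q - 1`; so it suffices that `(Q ⊙ Q)² = (Q ⊙ Q) / 6`.

Write `Q ⊙ Q = Y Yᴴ`, where the `j`-th row of `Y` is `q_j ⊗ q_j` for the `j`-th row `q_j` of `Q`.
These rows lie in the symmetric part of `range Q ⊗ range Q`, whose projection `P` has trace
`(3² + 3) / 2 = 6`. The Gram matrix `G = Yᴴ Y` then satisfies `P G = G`, `tr G = tr (Q ⊙ Q) = 1`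
and `tr G² = ∑ |Q j k|⁴ = 1/6`, which is the equality case of `(tr G)² ≤ tr P · tr G²`.
Hence `G = P / 6`, and `(Q ⊙ Q)² = Y G Yᴴ = (Q ⊙ Q) / 6`.
-/

open Matrix
open scoped Kronecker ComplexOrder

theorem half_smul_one_sub_mul_self {𝕜 A : Type*} [Field 𝕜] [NeZero (2 : 𝕜)] [Ring A]
    [Algebra 𝕜 A] {h : A} (hh : h * h = 1) :
    (2 : 𝕜)⁻¹ • (1 - h) * ((2 : 𝕜)⁻¹ • (1 - h)) = (2 : 𝕜)⁻¹ • (1 - h) := by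
  rw [smul_mul_smul, sub_mul, mul_sub, mul_sub, hh, one_mul, mul_one, one_mul]
  match_scalars <;> field_simp <;> ring

namespace Matrix

variable {α m n p q r : Type*}

def faceSplitting [Mul α] (A : Matrix m n α) (B : Matrix m p α) : Matrix m (n × p) α :=
  of fun j x => A j x.1 * B j x.2

theorem faceSplitting_mul_kronecker [Fintype n] [Fintype p] [CommSemiring α]
    (A : Matrix m n α) (B : Matrix m p α) (C : Matrix n q α) (D : Matrix p r α) :
    faceSplitting A B * (C ⊗ₖ D) = faceSplitting (A * C) (B * D) := by
  ext j ⟨c, d⟩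
  simp only [faceSplitting, mul_apply, of_apply, kronecker_apply, Fintype.sum_prod_type,
    Finset.sum_mul_sum]
  exact Finset.sum_congr rfl fun _ _ => Finset.sum_congr rfl fun _ _ => by ring

theorem faceSplitting_mul_conjTranspose [Fintype n] [Fintype p] [CommSemiring α] [StarRing α]
    (A : Matrix m n α) (B : Matrix m p α) (C : Matrix q n α) (D : Matrix q p α) :
    faceSplitting A B * (faceSplitting C D)ᴴ = (A * Cᴴ) ⊙ (B * Dᴴ) := by
  ext j k
  simp only [faceSplitting, mul_apply, of_apply, conjTranspose_apply, hadamard_apply,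
    Fintype.sum_prod_type, Finset.sum_mul_sum, star_mul']
  exact Finset.sum_congr rfl fun _ _ => Finset.sum_congr rfl fun _ _ => by ring

theorem faceSplitting_submatrix_swap [CommMagma α] (A : Matrix m n α) (B : Matrix m p α) :
    (faceSplitting A B).submatrix id Prod.swap = faceSplitting B A := by
  ext j x
  exact mul_comm _ _

/-- For an orthogonal projection `Q`, this is the orthogonal projection onto the symmetric
tensors in `range Q ⊗ range Q`. -/
noncomputable def symKronecker (Q : Matrix n n ℂ) : Matrix (n × n) (n × n) ℂ :=
  (2 : ℂ)⁻¹ • (Q ⊗ₖ Q + (Q ⊗ₖ Q).submatrix id Prod.swap)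

theorem IsHermitian.symKronecker {Q : Matrix n n ℂ} (hQ : Q.IsHermitian) :
    (symKronecker Q).IsHermitian := by
  refine IsHermitian.smul (IsHermitian.add ?_ ?_) (by simp [IsSelfAdjoint])
  all_goals ext ⟨a, b⟩ ⟨c, d⟩; simp [hQ.apply, mul_comm]

variable [Fintype n]

theorem symKronecker_mul_self {Q : Matrix n n ℂ} (hQ : Q * Q = Q) :
    symKronecker Q * symKronecker Q = symKronecker Q := by
  have hKK : Q ⊗ₖ Q * Q ⊗ₖ Q = Q ⊗ₖ Q := by rw [← mul_kronecker_mul, hQ]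
  have hK : (Q ⊗ₖ Q).submatrix Prod.swap id = (Q ⊗ₖ Q).submatrix id Prod.swap := by
    ext ⟨a, b⟩ ⟨c, d⟩
    exact mul_comm _ _
  unfold symKronecker
  generalize Q ⊗ₖ Q = K at hKK hK ⊢
  have hKS : K * K.submatrix id Prod.swap = K.submatrix id Prod.swap :=
    congrArg (submatrix · id Prod.swap) hKK
  have hSK : K.submatrix id Prod.swap * K = K.submatrix id Prod.swap := by
    rw [← hK]
    exact congrArg (submatrix · Prod.swap id) hKK
  have hSS : K.submatrix id Prod.swap * K.submatrix id Prod.swap = K := by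
    conv_lhs => arg 2; rw [← hK]
    simpa [hKK] using submatrix_mul_equiv K K id (Equiv.prodComm n n) id
  rw [smul_mul_smul, add_mul, mul_add, mul_add, hKK, hKS, hSK, hSS, add_comm _ K, ← two_smul ℂ,
    smul_smul]
  norm_num

theorem trace_symKronecker (Q : Matrix n n ℂ) :
    (symKronecker Q).trace = (Q.trace ^ 2 + (Q * Q).trace) / 2 := by
  simp only [symKronecker, trace_smul, trace_add, trace_kronecker]
  simp only [trace, diag_apply, submatrix_apply, id_eq, kroneckerMap_apply, Prod.fst_swap,
    Prod.snd_swap, Fintype.sum_prod_type, smul_eq_mul, mul_apply]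
  ring

theorem IsHermitian.eq_smul_of_trace {P G : Matrix m m ℂ} [Fintype m] (hP : P.IsHermitian)
    (hPP : P * P = P) (hG : G.IsHermitian) (hPG : P * G = G) (c : ℝ)
    (h₁ : G.trace = c * P.trace) (h₂ : (G * G).trace = c ^ 2 * P.trace) :
    G = (c : ℂ) • P := by
  have hGP : G * P = G := by
    simpa [hP.eq, hG.eq] using congrArg (fun M : Matrix m m ℂ => Mᴴ) hPG
  set Δ := G - (c : ℂ) • P
  have hΔ : Δᴴ = Δ := by simp [Δ, hP.eq, hG.eq]
  -- `tr (Δᴴ Δ) = tr G² - 2 c tr G + c² tr P`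
  have hΔΔ : (Δᴴ * Δ).trace = 0 := by
    simp only [hΔ, Δ, sub_mul, mul_sub, smul_mul_smul, Matrix.mul_smul, Matrix.smul_mul, hPG,
      hGP, hPP, trace_sub, trace_smul, h₁, h₂, smul_eq_mul]
    ring
  exact sub_eq_zero.mp (trace_conjTranspose_mul_self_eq_zero_iff.mp hΔΔ)

theorem hadamard_self_mul_self_eq_smul {Q : Matrix n n ℂ} (hQ : Q.IsHermitian) (hQQ : Q * Q = Q)
    (c : ℝ) (h₁ : (Q ⊙ Q).trace = c * (symKronecker Q).trace)
    (h₂ : ((Q ⊙ Q) * (Q ⊙ Q)).trace = c ^ 2 * (symKronecker Q).trace) :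
    (Q ⊙ Q) * (Q ⊙ Q) = (c : ℂ) • (Q ⊙ Q) := by
  set Y := faceSplitting Q Q
  have hYY : Y * Yᴴ = Q ⊙ Q := by rw [faceSplitting_mul_conjTranspose, hQ.eq, hQQ]
  have hYK : Y * Q ⊗ₖ Q = Y := by rw [faceSplitting_mul_kronecker, hQQ]
  have hYS : Y * (Q ⊗ₖ Q).submatrix id Prod.swap = Y := by
    change (Y * Q ⊗ₖ Q).submatrix id Prod.swap = Y
    rw [hYK, faceSplitting_submatrix_swap]
  have hYP : Y * symKronecker Q = Y := by
    rw [symKronecker, Matrix.mul_smul, Matrix.mul_add, hYK, hYS, ← two_smul ℂ, smul_smul]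
    norm_num
  have hPY : symKronecker Q * Yᴴ = Yᴴ := by
    simpa [hQ.symKronecker.eq] using congrArg (fun M : Matrix n (n × n) ℂ => Mᴴ) hYP
  have hG : Yᴴ * Y = (c : ℂ) • symKronecker Q := by
    refine hQ.symKronecker.eq_smul_of_trace (symKronecker_mul_self hQQ)
      (isHermitian_conjTranspose_mul_self Y) (by rw [← Matrix.mul_assoc, hPY]) c ?_ ?_
    · rw [trace_mul_comm, hYY, h₁]
    · rw [Matrix.mul_assoc, trace_mul_comm]
      simp only [← Matrix.mul_assoc]
      rw [Matrix.mul_assoc (Y * Yᴴ), hYY, h₂]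
  calc (Q ⊙ Q) * (Q ⊙ Q) = Y * (Yᴴ * Y) * Yᴴ := by rw [← hYY]; simp only [Matrix.mul_assoc]
    _ = (c : ℂ) • (Q ⊙ Q) := by
      rw [hG, Matrix.mul_smul, Matrix.smul_mul, Matrix.mul_assoc, hPY, hYY]

theorem IsHermitian.trace_hadamard_self_mul_self {A : Matrix n n ℂ} (hA : A.IsHermitian) :
    ((A ⊙ A) * (A ⊙ A)).trace = ∑ j, ∑ k, (‖A j k‖ : ℂ) ^ 4 := by
  simp only [trace, diag_apply, mul_apply, hadamard_apply]
  refine Finset.sum_congr rfl fun j _ => Finset.sum_congr rfl fun k _ => ?_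
  rw [← hA.apply k j, RCLike.star_def, show 4 = 2 * 2 from rfl, pow_mul, ← Complex.mul_conj']
  ring

theorem hadamard_self_mul_self_eq_inv_six_smul {Q : Matrix (Fin 9) (Fin 9) ℂ}
    (hQ : Q.IsHermitian) (hQQ : Q * Q = Q) (hdiag : ∀ j, Q j j = 1 / 3)
    (hoff : ∀ j k, j ≠ k → ‖Q j k‖ = 1 / 6) :
    (Q ⊙ Q) * (Q ⊙ Q) = ((6⁻¹ : ℝ) : ℂ) • (Q ⊙ Q) := by
  have htr : Q.trace = 3 := by norm_num [trace, hdiag]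
  have hsym : (symKronecker Q).trace = 6 := by
    rw [trace_symKronecker, hQQ, htr]
    norm_num
  have hrow : ∀ j, ∑ k, (‖Q j k‖ : ℂ) ^ 4 = 1 / 54 := by
    intro j
    rw [Fintype.sum_eq_add_sum_compl j, Finset.sum_congr rfl (g := fun _ => ((1 / 6 : ℝ) : ℂ) ^ 4)
      fun k hk => by rw [hoff j k (by simpa [eq_comm] using hk)]]
    norm_num [hdiag, Finset.card_compl]
  refine hadamard_self_mul_self_eq_smul hQ hQQ _ ?_ ?_
  · rw [hsym]
    norm_num [trace, hdiag]
  · rw [hQ.trace_hadamard_self_mul_self, hsym]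
    norm_num [hrow]

end Matrix

/-- If `H` is a `9 × 9` complex Hermitian Hadamard matrix (Hermitian,
`H * H = 1`, all entries of absolute value `1/3`) with positive real diagonal entries, then
`3 • (H ∘ H)` (where `H ∘ H` is the entrywise Hadamard square) is also Hermitian, squares to
the identity, has all entries of absolute value `1/3`, and has positive real diagonal
entries. -/
theorem stmt_9 (H : Matrix (Fin 9) (Fin 9) ℂ)
    (hherm : H.IsHermitian)
    (hunitary : H * H = 1)
    (habs : ∀ j k, ‖H j k‖ = 1 / 3)
    (hdiag : ∀ j, (H j j).im = 0 ∧ 0 < (H j j).re) :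
    ((3 : ℂ) • Matrix.hadamard H H).IsHermitian ∧
    ((3 : ℂ) • Matrix.hadamard H H) * ((3 : ℂ) • Matrix.hadamard H H) = 1 ∧
    (∀ j k, ‖((3 : ℂ) • Matrix.hadamard H H) j k‖ = 1 / 3) ∧
    (∀ j, ((((3 : ℂ) • Matrix.hadamard H H)) j j).im = 0 ∧
      0 < ((((3 : ℂ) • Matrix.hadamard H H)) j j).re) := by
  have hHdiag : ∀ j, H j j = 1 / 3 := fun j => by
    have hpos : 0 ≤ H j j := (Complex.lt_def.mpr ⟨(hdiag j).2, (hdiag j).1.symm⟩).le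
    rw [Complex.eq_coe_norm_of_nonneg hpos, habs]
    norm_num
  set Q := (2 : ℂ)⁻¹ • (1 - H)
  have hQ : Q.IsHermitian := (isHermitian_one.sub hherm).smul (by simp [IsSelfAdjoint])
  have hQQ : Q * Q = Q := half_smul_one_sub_mul_self hunitary
  have hQdiag : ∀ j, Q j j = 1 / 3 := fun j => by norm_num [Q, hHdiag]
  have hQoff : ∀ j k, j ≠ k → ‖Q j k‖ = 1 / 6 := fun j k hjk => by
    norm_num [Q, one_apply_ne hjk, habs]
  have hM : (3 : ℂ) • H ⊙ H = (12 : ℂ) • (Q ⊙ Q) - 1 := by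
    ext j k
    rcases eq_or_ne j k with rfl | hjk
    · norm_num [Q, hHdiag]
    · simp only [Q, Matrix.smul_apply, hadamard_apply, smul_eq_mul, hadamard_smul, smul_hadamard,
        Matrix.sub_apply, one_apply_ne hjk, zero_sub, mul_neg, neg_mul, neg_neg, sub_zero]
      ring
  refine ⟨(hherm.hadamard hherm).smul (by simp [IsSelfAdjoint]), ?_, fun j k => ?_,
    fun j => ?_⟩
  · rw [hM, sub_mul, mul_sub, mul_sub, smul_mul_smul,
      hadamard_self_mul_self_eq_inv_six_smul hQ hQQ hQdiag hQoff, Matrix.one_mul, Matrix.mul_one,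
      Matrix.one_mul]
    push_cast
    module
  · simp [habs]
  · simp [hHdiag]
end

section
/- Let d ≥ 2, let ψ ∈ EuclideanSpace ℂ (Fin d) be a WH SIC fiducial vector, and let φ : Fin d → EuclideanSpace ℂ (Fin d) be an orthonormal basis with φ 0 = ψ. Define the Naimark complement fiducial ψ̃ ∈ EuclideanSpace ℂ (Fin (d−1) × Fin d) by ψ̃ (i, j) = (1/√(d−1)) · (φ (i+1)) j, and for each p ∈ {0,…,d−1}² let D̃ p be the block-diagonal matrix consisting of d−1 diagonal copies of the displacement operator D p. Then ψ̃ is a unit vector and |⟪ψ̃, (D̃ p) ψ̃⟫|² = 1/((d−1)(d²−1)) for every p ∈ {0,…,d−1}² with p ≠ (0,0). -/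
open Matrix

/-- `τ = -exp(π i / d)`. -/
noncomputable def tau (d : ℕ) : ℂ := -Complex.exp (Real.pi * Complex.I / d)

/-- The Weyl–Heisenberg displacement operator `D p` in dimension `d`, for
`p = (p₁, p₂) ∈ {0, …, d-1}²`: its `(j,k)` entry is `τ^(p₂(p₁+2j))` if `j = k + p₁ mod d`
and `0` otherwise. -/
noncomputable def DispN (d : ℕ) (p : ℕ × ℕ) : Matrix (Fin d) (Fin d) ℂ :=
  Matrix.of fun j k =>
    if (j : ℕ) = ((k : ℕ) + p.1) % d then tau d ^ (p.2 * (p.1 + 2 * (j : ℕ))) else 0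

/-! The Naimark complement fiducial stacks the basis vectors `φ 1, …, φ (d-1)` complementing `ψ`,
scaled by `1/√(d-1)`, and `D̃ p` acts on each of them as `D p`. Hence
`⟪ψ̃, D̃ p ψ̃⟫ = (1/(d-1)) ∑_{i ≥ 1} ⟪φ i, D p φ i⟫`. Summed over the whole basis these terms give
`tr (D p) = 0` for `p ≠ 0`, so `⟪ψ̃, D̃ p ψ̃⟫ = -⟪ψ, D p ψ⟫/(d-1)`, whose squared modulus is
`1/((d-1)²(d+1))`. -/

open WithLp (toLp)
open scoped InnerProductSpace Kronecker

theorem Fin.sum_univ_cast_succ {M : Type*} [AddCommGroup M] {d : ℕ} (h : d - 1 + 1 = d)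
    (f : Fin d → M) :
    ∑ i : Fin (d - 1), f (Fin.cast h i.succ) = ∑ v, f v - f ⟨0, by omega⟩ := by
  rw [← Fin.sum_congr' f h, Fin.sum_univ_succ]
  exact (add_sub_cancel_left _ _).symm

section
variable {𝕜 ι n : Type*} [RCLike 𝕜] [Fintype ι] [Fintype n]

theorem OrthonormalBasis.sum_inner_mulVec_self [DecidableEq n]
    (b : OrthonormalBasis ι 𝕜 (EuclideanSpace 𝕜 n))
    (A : Matrix n n 𝕜) : ∑ i, ⟪b i, toLp 2 (A *ᵥ b i)⟫_𝕜 = A.trace := by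
  rw [← A.trace_toLin_eq (PiLp.basisFun 2 𝕜 n), ← Matrix.toLpLin_eq_toLin,
    LinearMap.trace_eq_sum_inner _ b]
  rfl

theorem OrthonormalBasis.sum_inner_mulVec_self_cast_succ [DecidableEq n] {d : ℕ}
    (b : OrthonormalBasis (Fin d) 𝕜 (EuclideanSpace 𝕜 n)) (h : d - 1 + 1 = d) (A : Matrix n n 𝕜) :
    ∑ i : Fin (d - 1), ⟪b (Fin.cast h i.succ), toLp 2 (A *ᵥ b (Fin.cast h i.succ))⟫_𝕜 =
      A.trace - ⟪b ⟨0, by omega⟩, toLp 2 (A *ᵥ b ⟨0, by omega⟩)⟫_𝕜 := by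
  rw [Fin.sum_univ_cast_succ h fun v ↦ ⟪b v, toLp 2 (A *ᵥ b v)⟫_𝕜, b.sum_inner_mulVec_self]

theorem EuclideanSpace.norm_sq_eq_sum_norm_sq_of_apply_prod (v : ι → EuclideanSpace 𝕜 n)
    {w : EuclideanSpace 𝕜 (ι × n)} (hw : ∀ i j, w (i, j) = v i j) :
    ‖w‖ ^ 2 = ∑ i, ‖v i‖ ^ 2 := by
  simp only [EuclideanSpace.norm_sq_eq, Fintype.sum_prod_type, hw]

theorem Matrix.one_kronecker_mulVec_apply [DecidableEq ι] (A : Matrix n n 𝕜) (w : ι × n → 𝕜)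
    (i : ι) (j : n) : ((1 : Matrix ι ι 𝕜) ⊗ₖ A *ᵥ w) (i, j) = (A *ᵥ fun k ↦ w (i, k)) j := by
  simp [Matrix.mulVec, dotProduct, Fintype.sum_prod_type, Matrix.one_apply, ite_mul]

theorem EuclideanSpace.inner_one_kronecker_mulVec_of_apply_prod [DecidableEq ι]
    (A : Matrix n n 𝕜) (v : ι → EuclideanSpace 𝕜 n) {w : EuclideanSpace 𝕜 (ι × n)}
    (hw : ∀ i j, w (i, j) = v i j) :
    ⟪w, toLp 2 ((1 : Matrix ι ι 𝕜) ⊗ₖ A *ᵥ w)⟫_𝕜 = ∑ i, ⟪v i, toLp 2 (A *ᵥ v i)⟫_𝕜 := by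
  simp only [PiLp.inner_apply, Fintype.sum_prod_type, Matrix.one_kronecker_mulVec_apply, hw]

end

theorem isPrimitiveRoot_tau_sq {d : ℕ} (hd : d ≠ 0) : IsPrimitiveRoot (tau d ^ 2) d := by
  have h : tau d ^ 2 = Complex.exp (2 * Real.pi * Complex.I / d) := by
    rw [tau, neg_sq, ← Complex.exp_nat_mul]
    push_cast
    ring_nf
  rw [h]
  exact Complex.isPrimitiveRoot_exp d hd

theorem DispN_apply_self_of_pos {d : ℕ} {p : ℕ × ℕ} (h0 : 0 < p.1) (hd : p.1 < d) (j : Fin d) :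
    DispN d p j j = 0 := by
  refine if_neg fun h ↦ ?_
  rcases Nat.lt_or_ge ((j : ℕ) + p.1) d with hlt | hge
  · rw [Nat.mod_eq_of_lt hlt] at h
    omega
  · rw [Nat.mod_eq_sub_mod hge, Nat.mod_eq_of_lt (by omega)] at h
    omega

theorem DispN_zero_left_apply_self (d b : ℕ) (j : Fin d) :
    DispN d (0, b) j j = ((tau d ^ 2) ^ b) ^ (j : ℕ) := by
  rw [DispN, Matrix.of_apply, if_pos (by simp [Nat.mod_eq_of_lt j.isLt]), ← pow_mul, ← pow_mul]
  ring_nf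

theorem trace_DispN {d : ℕ} {p : ℕ × ℕ} (h1 : p.1 < d) (h2 : p.2 < d) (hp : p ≠ (0, 0)) :
    (DispN d p).trace = 0 := by
  obtain ⟨a, b⟩ := p
  rcases Nat.eq_zero_or_pos a with rfl | ha
  · have hω := isPrimitiveRoot_tau_sq (d := d) (by omega)
    have hb : (tau d ^ 2) ^ b ≠ 1 := fun h ↦
      hp (by simpa using Nat.eq_zero_of_dvd_of_lt ((hω.pow_eq_one_iff_dvd b).mp h) h2)
    simp only [Matrix.trace, Matrix.diag_apply]
    rw [Fintype.sum_congr _ _ (DispN_zero_left_apply_self d b),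
      Fin.sum_univ_eq_sum_range (fun j ↦ ((tau d ^ 2) ^ b) ^ j), geom_sum_eq hb, ← pow_mul,
      mul_comm, pow_mul, hω.pow_eq_one, one_pow, sub_self, zero_div]
  · exact Finset.sum_eq_zero fun j _ ↦ DispN_apply_self_of_pos ha h1 j

/-- Let `d ≥ 2`, `ψ` a WH SIC fiducial vector, `φ` an orthonormal basis
with `φ 0 = ψ`, and let `ψ̃ (i,j) = (1/√(d-1)) · (φ (i+1)) j` be the Naimark complement
fiducial, with `D̃ p` the block-diagonal sum of `d-1` copies of `D p`.  Then `ψ̃` is a unit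
vector and `|⟪ψ̃, D̃ p ψ̃⟫|² = 1/((d-1)(d²-1))` for all `p ≠ (0,0)`. -/
theorem stmt_15 (d : ℕ) (hd : 2 ≤ d)
    (ψ : EuclideanSpace ℂ (Fin d))
    (hfid : ∀ p : ℕ × ℕ, p.1 < d → p.2 < d → p ≠ (0, 0) →
      ‖(inner ℂ ψ (WithLp.toLp 2 ((DispN d p).mulVec ψ)) : ℂ)‖ ^ 2 = 1 / (d + 1))
    (φ : OrthonormalBasis (Fin d) ℂ (EuclideanSpace ℂ (Fin d)))
    (hφ0 : φ ⟨0, by omega⟩ = ψ)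
    (ψt : EuclideanSpace ℂ (Fin (d - 1) × Fin d))
    (hψt : ∀ (i : Fin (d - 1)) (j : Fin d),
      ψt (i, j) = (1 / (Real.sqrt ((d : ℝ) - 1) : ℂ)) * φ (Fin.cast (by omega) i.succ) j)
    (Dt : ℕ × ℕ → Matrix (Fin (d - 1) × Fin d) (Fin (d - 1) × Fin d) ℂ)
    (hDt : ∀ p a b, Dt p a b = if a.1 = b.1 then DispN d p a.2 b.2 else 0) :
    ‖ψt‖ = 1 ∧
    ∀ p : ℕ × ℕ, p.1 < d → p.2 < d → p ≠ (0, 0) →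
      ‖(inner ℂ ψt (WithLp.toLp 2 ((Dt p).mulVec ψt)) : ℂ)‖ ^ 2
        = 1 / (((d : ℝ) - 1) * ((d : ℝ) ^ 2 - 1)) := by
  have hd1 : (0 : ℝ) < d - 1 := by
    rw [sub_pos, Nat.one_lt_cast]
    omega
  set c : ℝ := 1 / √(d - 1)
  have hc : c ^ 2 = 1 / (d - 1) := by rw [div_pow, one_pow, Real.sq_sqrt hd1.le]
  have hrow (i : Fin (d - 1)) (j : Fin d) :
      ψt (i, j) = ((c : ℂ) • φ (Fin.cast (by omega) i.succ)) j := by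
    simp [hψt, c]
  have hDt_eq (p : ℕ × ℕ) : Dt p = (1 : Matrix (Fin (d - 1)) (Fin (d - 1)) ℂ) ⊗ₖ DispN d p := by
    ext a b
    rw [hDt, Matrix.kronecker_apply, Matrix.one_apply]
    split_ifs <;> simp
  refine ⟨?_, fun p h1 h2 hp ↦ ?_⟩
  · have hsq : ‖ψt‖ ^ 2 = 1 := by
      rw [EuclideanSpace.norm_sq_eq_sum_norm_sq_of_apply_prod _ hrow]
      simp only [Complex.coe_smul, norm_smul, Real.norm_eq_abs, φ.norm_eq_one, mul_one, sq_abs,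
        hc, one_div, Finset.sum_const, Finset.card_univ, Fintype.card_fin, nsmul_eq_mul]
      rw [Nat.cast_sub (by omega), Nat.cast_one, mul_inv_cancel₀ hd1.ne']
    exact (pow_eq_one_iff_of_nonneg (norm_nonneg _) two_ne_zero).mp hsq
  · have hsum := φ.sum_inner_mulVec_self_cast_succ (by omega) (DispN d p)
    rw [trace_DispN h1 h2 hp, hφ0, zero_sub] at hsum
    have hinner : ⟪ψt, toLp 2 (Dt p *ᵥ ψt)⟫_ℂ = (c : ℂ) ^ 2 * -⟪ψ, toLp 2 (DispN d p *ᵥ ψ)⟫_ℂ := by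
      rw [hDt_eq, EuclideanSpace.inner_one_kronecker_mulVec_of_apply_prod _ _ hrow]
      simp only [WithLp.ofLp_smul, Matrix.mulVec_smul, WithLp.toLp_smul, inner_smul_left,
        inner_smul_right, ← Finset.mul_sum, hsum, Complex.conj_ofReal]
      ring
    rw [hinner, norm_mul, norm_neg, mul_pow, hfid p h1 h2 hp, norm_pow, Complex.norm_real,
      Real.norm_eq_abs, sq_abs, ← pow_mul, pow_mul' c 2 2, hc,
      show (d : ℝ) ^ 2 - 1 = (d - 1) * (d + 1) by ring]
    field_simp
end

section
/- Let d ≥ 1 and let M : (ZMod d)² → ℂ satisfy M 0 = 1, |M p| = 1 for all p, and M (−p) = conj (M p) for all p. Define the (d²) × (d²) matrix Q, indexed by (ZMod d)², by Q p q = (1/(2d)) · ω^{−(p₂q₁ − p₁q₂)} · M (p − q) + (1/2) · δ_{p,q}, where ω = exp(2π i / d). Then Q is Hermitian, and Q is an orthogonal projection (Q * Q = Q) of rank d(d+1)/2 if and only if ∑_{r ∈ (ZMod d)²} ω^{−(p₂r₁ − p₁r₂)} · (M (p − r)) · (M r) = d² · δ_{p,0} for all p ∈ (ZMod d)². -/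
/-!
With `ψ` the standard additive character of `ZMod d` and `ω` the symplectic form, put
`W p q = ψ (ω p q) * M (p - q)`, so that `Q = (2d)⁻¹ • (W + d • 1)`. Such an affine image of `W`
is idempotent exactly when `W * W = d² • 1`, and the cocycle identity
`ω p r + ω r q = ω p q + ω (p - q) (r - q)` turns the entries of `W * W` into
`ψ (ω p q) * S (p - q)`, where `S` is the twisted self-convolution of `M` appearing in the
theorem. The rank of an idempotent matrix is its trace, which `M 0 = 1` makes `d (d + 1) / 2`.
Hermiticity comes from `M (-p) = conj (M p)` together with `ψ (-a) = conj (ψ a)`.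
-/

open Matrix

theorem isIdempotentElem_inv_two_mul_smul_add_iff {K A : Type*} [Field K] [Ring A] [Algebra K A]
    {c : K} (hc : c ≠ 0) (h2 : (2 : K) ≠ 0) (x : A) :
    IsIdempotentElem ((2 * c)⁻¹ • (x + c • 1)) ↔ x * x = c ^ 2 • 1 := by
  have hsq : (x + c • 1) * (x + c • 1) = x * x + (2 * c) • x + c ^ 2 • 1 := by
    simp only [add_mul, mul_add, smul_mul_assoc, mul_smul_comm, one_mul, mul_one]
    module
  have hdiff : ((2 * c)⁻¹ • (x + c • 1)) * ((2 * c)⁻¹ • (x + c • 1)) - (2 * c)⁻¹ • (x + c • 1)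
      = ((2 * c)⁻¹ * (2 * c)⁻¹) • (x * x - c ^ 2 • 1) := by
    rw [smul_mul_smul, hsq]
    match_scalars <;> field_simp <;> ring
  rw [IsIdempotentElem, ← sub_eq_zero, hdiff, smul_eq_zero, sub_eq_zero]
  simp [hc, h2]

theorem Matrix.rank_eq_trace_of_isIdempotentElem_s17 {K n : Type*} [Field K] [Fintype n]
    [DecidableEq n] {A : Matrix n n K} (hA : IsIdempotentElem A) : (A.rank : K) = A.trace := by
  have h : IsIdempotentElem (Matrix.toLin' A) := hA.map Matrix.toLinAlgEquiv'
  rw [Matrix.rank, ← Matrix.toLin'_apply', ← (LinearMap.IsIdempotentElem.isProj_range _ h).trace,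
    Matrix.trace_toLin'_eq]

theorem ZMod.stdAddChar_eq_exp_pow (d : ℕ) [NeZero d] (a : ZMod d) :
    ZMod.stdAddChar a = Complex.exp (2 * Real.pi * Complex.I / d) ^ a.val := by
  rw [ZMod.stdAddChar_apply, ZMod.toCircle_apply, ← Complex.exp_nat_mul]
  ring_nf

section TwistedConvolution

variable {R : Type*} [CommRing R]

def symplecticForm (p q : R × R) : R := p.1 * q.2 - p.2 * q.1

theorem symplecticForm_self (p : R × R) : symplecticForm p p = 0 := by
  simp only [symplecticForm]; ring

theorem symplecticForm_swap (p q : R × R) : symplecticForm q p = -symplecticForm p q := by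
  simp only [symplecticForm]; ring

theorem symplecticForm_add_symplecticForm (p q r : R × R) :
    symplecticForm p r + symplecticForm r q
      = symplecticForm p q + symplecticForm (p - q) (r - q) := by
  simp only [symplecticForm, Prod.fst_sub, Prod.snd_sub]; ring

variable [Fintype R] (ψ : AddChar R ℂ) (M : R × R → ℂ)

def twistedMatrix : Matrix (R × R) (R × R) ℂ :=
  Matrix.of fun p q => ψ (symplecticForm p q) * M (p - q)

def twistedSelfConvolution (p : R × R) : ℂ :=
  ∑ r, ψ (symplecticForm p r) * M (p - r) * M r

theorem twistedMatrix_isHermitian (hM : ∀ p, M (-p) = starRingEnd ℂ (M p)) :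
    (twistedMatrix ψ M).IsHermitian := by
  ext p q
  rw [conjTranspose_apply, twistedMatrix, of_apply, of_apply, star_mul', ← starRingEnd_apply,
    ← starRingEnd_apply, ← AddChar.map_neg_eq_conj, ← hM, symplecticForm_swap p q, neg_neg,
    neg_sub]

theorem twistedMatrix_mul_self_apply (p q : R × R) :
    (twistedMatrix ψ M * twistedMatrix ψ M) p q
      = ψ (symplecticForm p q) * twistedSelfConvolution ψ M (p - q) := by
  rw [mul_apply, twistedSelfConvolution, Finset.mul_sum]
  refine Fintype.sum_equiv (Equiv.subRight q) _ _ fun r => ?_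
  have hψ : ψ (symplecticForm p r) * ψ (symplecticForm r q)
      = ψ (symplecticForm p q) * ψ (symplecticForm (p - q) (r - q)) := by
    rw [← ψ.map_add_eq_mul, ← ψ.map_add_eq_mul, symplecticForm_add_symplecticForm]
  have hsub : p - r = p - q - (r - q) := by abel
  simp only [twistedMatrix, of_apply, Equiv.subRight_apply, hsub]
  linear_combination M (p - q - (r - q)) * M (r - q) * hψ

theorem twistedMatrix_mul_self_eq_smul_one_iff [DecidableEq R] (c : ℂ) :
    twistedMatrix ψ M * twistedMatrix ψ M = c • 1
      ↔ ∀ p, twistedSelfConvolution ψ M p = if p = 0 then c else 0 := by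
  constructor
  · intro h p
    have hp0 := congr_fun₂ h p 0
    rwa [twistedMatrix_mul_self_apply, sub_zero, Matrix.smul_apply, one_apply, smul_ite,
      smul_zero, smul_eq_mul, mul_one, symplecticForm, Prod.fst_zero, Prod.snd_zero, mul_zero,
      mul_zero, sub_zero, ψ.map_zero_eq_one, one_mul] at hp0
  · intro h
    ext p q
    rw [twistedMatrix_mul_self_apply, h, Matrix.smul_apply, one_apply]
    by_cases hpq : p = q
    · simp [hpq, symplecticForm_self]
    · simp [hpq, sub_eq_zero]

theorem trace_twistedMatrix : (twistedMatrix ψ M).trace = Fintype.card R ^ 2 * M 0 := by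
  simp [trace, twistedMatrix, symplecticForm_self, sq]

theorem rank_of_isIdempotentElem_inv_two_mul_smul_twistedMatrix_add [DecidableEq R]
    (hM0 : M 0 = 1) {n : ℕ} (hn : Fintype.card R = n)
    (h : IsIdempotentElem ((2 * (n : ℂ))⁻¹ • (twistedMatrix ψ M + (n : ℂ) • 1))) :
    ((2 * (n : ℂ))⁻¹ • (twistedMatrix ψ M + (n : ℂ) • 1)).rank = n * (n + 1) / 2 := by
  have hn0 : (n : ℂ) ≠ 0 := by rw [← hn]; exact_mod_cast Fintype.card_ne_zero
  have htrace :
      ((2 * (n : ℂ))⁻¹ • (twistedMatrix ψ M + (n : ℂ) • 1)).trace = n * (n + 1) / 2 := by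
    rw [trace_smul, trace_add, trace_twistedMatrix, trace_smul, trace_one, Fintype.card_prod, hn,
      hM0, smul_eq_mul, smul_eq_mul]
    push_cast
    field_simp
    ring
  have hcast : ((n * (n + 1) / 2 : ℕ) : ℂ) = n * (n + 1) / 2 := by
    rw [Nat.cast_div (Nat.even_mul_succ_self n).two_dvd two_ne_zero]
    push_cast
    ring
  exact_mod_cast (rank_eq_trace_of_isIdempotentElem_s17 h).trans (htrace.trans hcast.symm)

end TwistedConvolution

theorem stmt_17_general (d : ℕ) [NeZero d]
    (M : ZMod d × ZMod d → ℂ)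
    (hM0 : M 0 = 1)
    (hMconj : ∀ p, M (-p) = starRingEnd ℂ (M p))
    (Q : Matrix (ZMod d × ZMod d) (ZMod d × ZMod d) ℂ)
    (hQ : ∀ p q, Q p q = (1 / (2 * (d : ℂ))) *
      Complex.exp (2 * Real.pi * Complex.I / d) ^ ((p.1 * q.2 - p.2 * q.1).val)
        * M (p - q) + if p = q then (1 / 2 : ℂ) else 0) :
    Q.IsHermitian ∧
    ((Q * Q = Q ∧ Q.rank = d * (d + 1) / 2) ↔ ∀ p : ZMod d × ZMod d,
      ∑ r : ZMod d × ZMod d,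
        Complex.exp (2 * Real.pi * Complex.I / d) ^ ((p.1 * r.2 - p.2 * r.1).val)
          * M (p - r) * M r
        = if p = 0 then (d : ℂ) ^ 2 else 0) := by
  have hd : (d : ℂ) ≠ 0 := NeZero.ne _
  have hQW : Q = (2 * (d : ℂ))⁻¹ • (twistedMatrix ZMod.stdAddChar M + (d : ℂ) • 1) := by
    ext p q
    rw [hQ, Matrix.smul_apply, Matrix.add_apply, Matrix.smul_apply, one_apply, twistedMatrix,
      of_apply, ZMod.stdAddChar_eq_exp_pow, symplecticForm]
    split_ifs <;> simp only [smul_eq_mul, mul_one, mul_zero, add_zero] <;> field_simp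
  have hrank (hQQ : Q * Q = Q) : Q.rank = d * (d + 1) / 2 := by
    rw [hQW] at hQQ ⊢
    exact rank_of_isIdempotentElem_inv_two_mul_smul_twistedMatrix_add _ M hM0 (ZMod.card d) hQQ
  have hS (p : ZMod d × ZMod d) : twistedSelfConvolution ZMod.stdAddChar M p =
      ∑ r : ZMod d × ZMod d,
        Complex.exp (2 * Real.pi * Complex.I / d) ^ ((p.1 * r.2 - p.2 * r.1).val)
          * M (p - r) * M r := by
    simp only [twistedSelfConvolution, symplecticForm, ZMod.stdAddChar_eq_exp_pow]
  refine ⟨hQW ▸ ((twistedMatrix_isHermitian _ M hMconj).add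
    (isHermitian_one.smul (.natCast d))).smul ((IsSelfAdjoint.ofNat 2).mul (.natCast d)).inv₀, ?_⟩
  rw [and_iff_left_of_imp hrank]
  simp_rw [← hS, ← twistedMatrix_mul_self_eq_smul_one_iff]
  rw [hQW]
  exact isIdempotentElem_inv_two_mul_smul_add_iff hd two_ne_zero _

/-- Let `M : (ZMod d)² → ℂ` satisfy `M 0 = 1`, `|M p| = 1` and
`M (-p) = conj (M p)`, and let `Q` be the `d² × d²` matrix
`Q p q = (1/(2d)) ω^{-(p₂q₁ - p₁q₂)} M (p - q) + (1/2) δ_{p,q}` with `ω = exp(2πi/d)`.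
Then `Q` is Hermitian, and `Q` is an orthogonal projection of rank `d(d+1)/2` iff
`∑_r ω^{-(p₂r₁ - p₁r₂)} M (p-r) M r = d² δ_{p,0}` for all `p`. -/
theorem stmt_17 (d : ℕ) [NeZero d] (hd : 1 ≤ d)
    (M : ZMod d × ZMod d → ℂ)
    (hM0 : M 0 = 1)
    (hMabs : ∀ p, ‖M p‖ = 1)
    (hMconj : ∀ p, M (-p) = starRingEnd ℂ (M p))
    (Q : Matrix (ZMod d × ZMod d) (ZMod d × ZMod d) ℂ)
    (hQ : ∀ p q, Q p q = (1 / (2 * (d : ℂ))) *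
      Complex.exp (2 * Real.pi * Complex.I / d) ^ ((p.1 * q.2 - p.2 * q.1).val)
        * M (p - q) + if p = q then (1 / 2 : ℂ) else 0) :
    Q.IsHermitian ∧
    ((Q * Q = Q ∧ Q.rank = d * (d + 1) / 2) ↔ ∀ p : ZMod d × ZMod d,
      ∑ r : ZMod d × ZMod d,
        Complex.exp (2 * Real.pi * Complex.I / d) ^ ((p.1 * r.2 - p.2 * r.1).val)
          * M (p - r) * M r
        = if p = 0 then (d : ℂ) ^ 2 else 0) :=
  stmt_17_general d M hM0 hMconj Q hQ
end
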